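/- arXiv:0706.2851 — 4 statements merged into one kernel-verified Lean document; each statement's English description precedes it below -/
import Mathlib

section
/- There exists a constant c > 0 such that for all nonnegative integers l and l₁ with l₁ even and l₁ ≤ 2l, one has |C(l, l₁, l)| ≤ c · (l₁ + 1)^{−1/4}. -/
open scoped BigOperators

noncomputable section

/-- Zero-projection Clebsch–Gordan coefficient of `SO(3)`. -/
def CG0 (l₁ l₂ l₃ : ℕ) : ℝ :=
  if Even (l₁ + l₂ + l₃) ∧ l₃ ≤ l₁ + l₂ ∧ l₁ ≤ l₂ + l₃ ∧ l₂ ≤ l₁ + l₃ then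
    (-1 : ℝ) ^ ((l₁ + l₂ + l₃) / 2 - l₃) * Real.sqrt (2 * (l₃ : ℝ) + 1) *
      (((l₁ + l₂ + l₃) / 2).factorial : ℝ) /
      ((((l₁ + l₂ + l₃) / 2 - l₃).factorial : ℝ) * (((l₁ + l₂ + l₃) / 2 - l₂).factorial : ℝ) *
        (((l₁ + l₂ + l₃) / 2 - l₁).factorial : ℝ)) *
      Real.sqrt ((((l₁ + l₂ - l₃).factorial : ℝ) * ((l₁ + l₃ - l₂).factorial : ℝ) *
        ((l₂ + l₃ - l₁).factorial : ℝ)) / ((l₁ + l₂ + l₃ + 1).factorial : ℝ))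
  else 0

lemma cb_fact (n : ℕ) : (2*n).factorial = n.centralBinom * n.factorial * n.factorial := by
  have h := Nat.choose_mul_factorial_mul_factorial (show n ≤ 2*n by omega)
  rw [show 2*n - n = n from by omega] at h
  rw [Nat.centralBinom_eq_two_mul_choose]
  omega

lemma cb_upper (n : ℕ) : (n+1) * n.centralBinom ^ 2 ≤ 16 ^ n := by
  induction n with
  | zero => simp [Nat.centralBinom]
  | succ n ih =>
    have h := Nat.succ_mul_centralBinom_succ n
    refine Nat.le_of_mul_le_mul_left ?_ (show 0 < (n+1)^2 by positivity)
    calc (n+1)^2 * ((n+1+1) * Nat.centralBinom (n+1)^2)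
        = (n+2) * ((n+1) * Nat.centralBinom (n+1))^2 := by ring
      _ = (n+2) * (2*(2*n+1))^2 * Nat.centralBinom n ^2 := by rw [h]; ring
      _ ≤ 16*(n+1)^2 * ((n+1) * Nat.centralBinom n^2) := by nlinarith [Nat.centralBinom_pos n]
      _ ≤ 16*(n+1)^2 * 16^n := Nat.mul_le_mul_left _ ih
      _ = (n+1)^2 * 16^(n+1) := by ring

lemma cb_lower (n : ℕ) : 16 ^ n ≤ (4*n+1) * n.centralBinom ^ 2 := by
  induction n with
  | zero => simp [Nat.centralBinom]
  | succ n ih =>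
    have h := Nat.succ_mul_centralBinom_succ n
    refine Nat.le_of_mul_le_mul_left ?_ (show 0 < (n+1)^2 by positivity)
    calc (n+1)^2 * 16^(n+1)
        = 16*(n+1)^2 * 16^n := by ring
      _ ≤ 16*(n+1)^2 * ((4*n+1) * Nat.centralBinom n^2) := Nat.mul_le_mul_left _ ih
      _ ≤ (4*n+5) * ((2*(2*n+1)) * Nat.centralBinom n)^2 := by nlinarith [Nat.centralBinom_pos n]
      _ = (4*n+5) * ((n+1) * Nat.centralBinom (n+1))^2 := by rw [h]
      _ = (n+1)^2 * ((4*(n+1)+1) * Nat.centralBinom (n+1)^2) := by ring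

lemma poly_bound (x y : ℝ) (hx : 0 ≤ x) (hy : 0 ≤ y) :
    (4*(2*x+y)+1) * (x+x+1) ≤ 81 * ((x+1)^2 * (y+1)) := by
  nlinarith [mul_nonneg (mul_nonneg hx hx) hy, mul_nonneg hx hy, mul_nonneg hx hx]

set_option maxHeartbeats 1000000 in
lemma key (a b : ℕ) :
    Real.sqrt (2*((a:ℝ)+(b:ℝ))+1) * (((2*a+b).factorial:ℝ)) /
      ((a.factorial:ℝ) * (b.factorial:ℝ) * (a.factorial:ℝ)) *
      Real.sqrt ((((2*a).factorial:ℝ) * ((2*b).factorial:ℝ) * ((2*a).factorial:ℝ)) /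
        (((2*(2*a+b)+1).factorial:ℝ)))
    ≤ 3 * ((a:ℝ)+(a:ℝ)+1) ^ (-(1/4:ℝ)) := by
  have hα0 : (0:ℝ) < (a.centralBinom : ℝ) := by exact_mod_cast Nat.centralBinom_pos a
  have hβ0 : (0:ℝ) < (b.centralBinom : ℝ) := by exact_mod_cast Nat.centralBinom_pos b
  have hδ0 : (0:ℝ) < ((2*a+b).centralBinom : ℝ) := by exact_mod_cast Nat.centralBinom_pos (2*a+b)
  have hIa : ((a:ℝ)+1) * (a.centralBinom : ℝ)^2 ≤ 16^a := by exact_mod_cast cb_upper a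
  have hIb : ((b:ℝ)+1) * (b.centralBinom : ℝ)^2 ≤ 16^b := by exact_mod_cast cb_upper b
  have hId : (16:ℝ)^(2*a+b) ≤ (4*(2*(a:ℝ)+(b:ℝ))+1) * ((2*a+b).centralBinom : ℝ)^2 := by
    exact_mod_cast cb_lower (2*a+b)
  set fa : ℝ := (a.factorial : ℝ) with hfa
  set fb : ℝ := (b.factorial : ℝ) with hfb
  set Fct : ℝ := (((2*a+b).factorial : ℝ)) with hFct
  set α : ℝ := (a.centralBinom : ℝ) with hαd
  set β : ℝ := (b.centralBinom : ℝ) with hβd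
  set δ : ℝ := ((2*a+b).centralBinom : ℝ) with hδd
  have hfa0 : 0 < fa := by positivity
  have hfb0 : 0 < fb := by positivity
  have hF0 : 0 < Fct := by positivity
  -- factorial identities over ℝ
  have hA : ((2*a).factorial : ℝ) = α * fa^2 := by rw [cb_fact a]; push_cast; ring
  have hB : ((2*b).factorial : ℝ) = β * fb^2 := by rw [cb_fact b]; push_cast; ring
  have hR : ((2*(2*a+b)+1).factorial : ℝ)
      = (2*(2*(a:ℝ)+(b:ℝ))+1) * (δ * Fct^2) := by
    rw [Nat.factorial_succ, cb_fact (2*a+b)]; push_cast; ring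
  set u : ℝ := 2*((a:ℝ)+(b:ℝ))+1 with hu
  set w : ℝ := (a:ℝ)+(a:ℝ)+1 with hw
  have hu0 : 0 < u := by positivity
  have hw0 : 0 < w := by positivity
  set Y : ℝ := Real.sqrt u * Fct / (fa * fb * fa) *
      Real.sqrt ((((2*a).factorial:ℝ) * ((2*b).factorial:ℝ) * ((2*a).factorial:ℝ)) /
        (((2*(2*a+b)+1).factorial:ℝ))) with hY
  have hYnn : 0 ≤ Y := by positivity
  have hZnn : (0:ℝ) ≤ 3 * w ^ (-(1/4:ℝ)) := by positivity
  rw [← pow_le_pow_iff_left₀ hYnn hZnn (show 4 ≠ 0 by norm_num)]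
  have hZ4 : (3 * w ^ (-(1/4:ℝ)))^4 = 81 / w := by
    rw [mul_pow, ← Real.rpow_natCast (w ^ (-(1/4:ℝ))) 4, ← Real.rpow_mul hw0.le]
    norm_num
    rw [Real.rpow_neg_one]
    ring
  rw [hZ4, le_div_iff₀ hw0]
  -- compute Y^2
  have hv0 : (0:ℝ) ≤ (((2*a).factorial:ℝ) * ((2*b).factorial:ℝ) * ((2*a).factorial:ℝ)) /
      (((2*(2*a+b)+1).factorial:ℝ)) := by positivity
  have hY2 : Y^2 = u * Fct^2 * ((((2*a).factorial:ℝ) * ((2*b).factorial:ℝ) * ((2*a).factorial:ℝ)) /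
      (((2*(2*a+b)+1).factorial:ℝ))) / (fa*fb*fa)^2 := by
    rw [hY, mul_pow, div_pow, mul_pow, Real.sq_sqrt hu0.le, Real.sq_sqrt hv0]
    ring
  have hXid : Y^2 * ((2*(2*(a:ℝ)+(b:ℝ))+1) * δ) = u * α^2 * β := by
    rw [hY2, hA, hB, hR]
    field_simp
  -- main estimate
  set P : ℝ := (2*(2*(a:ℝ)+(b:ℝ))+1) * δ with hP
  have hP0 : 0 < P := by positivity
  refine le_of_mul_le_mul_right ?_ (show (0:ℝ) < P^2 * (((a:ℝ)+1)^2 * ((b:ℝ)+1)) by positivity)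
  have hY4 : Y^4 * w * (P^2 * (((a:ℝ)+1)^2 * ((b:ℝ)+1)))
      = (u * α^2 * β)^2 * w * (((a:ℝ)+1)^2 * ((b:ℝ)+1)) := by
    rw [show Y^4 * w * (P^2 * (((a:ℝ)+1)^2 * ((b:ℝ)+1)))
      = (Y^2 * P)^2 * w * (((a:ℝ)+1)^2 * ((b:ℝ)+1)) from by ring, hXid]
  rw [hY4]
  have step1 : (u * α^2 * β)^2 * w * (((a:ℝ)+1)^2 * ((b:ℝ)+1))
      = u^2 * (((a:ℝ)+1) * α^2)^2 * (((b:ℝ)+1) * β^2) * w := by ring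
  rw [step1]
  have hu_le : u ≤ 2*(2*(a:ℝ)+(b:ℝ))+1 := by
    rw [hu]; have := Nat.cast_nonneg (α := ℝ) a; linarith
  calc u^2 * (((a:ℝ)+1) * α^2)^2 * (((b:ℝ)+1) * β^2) * w
      ≤ (2*(2*(a:ℝ)+(b:ℝ))+1)^2 * ((16:ℝ)^a)^2 * ((16:ℝ)^b) * w := by
        have e1 := pow_le_pow_left₀ hu0.le hu_le 2
        have e2 := pow_le_pow_left₀ (by positivity : (0:ℝ) ≤ ((a:ℝ)+1) * α^2) hIa 2
        refine mul_le_mul_of_nonneg_right ?_ hw0.le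
        exact mul_le_mul (mul_le_mul e1 e2 (by positivity) (by positivity)) hIb
          (by positivity) (by positivity)
    _ = (2*(2*(a:ℝ)+(b:ℝ))+1)^2 * (16:ℝ)^(2*a+b) * w := by
        rw [show 2*a+b = a*2+b from by omega, pow_add, pow_mul]; ring
    _ ≤ (2*(2*(a:ℝ)+(b:ℝ))+1)^2 * ((4*(2*(a:ℝ)+(b:ℝ))+1) * δ^2) * w := by
        gcongr
    _ = ((2*(2*(a:ℝ)+(b:ℝ))+1)^2 * δ^2) * ((4*(2*(a:ℝ)+(b:ℝ))+1) * w) := by ring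
    _ ≤ ((2*(2*(a:ℝ)+(b:ℝ))+1)^2 * δ^2) * (81 * (((a:ℝ)+1)^2 * ((b:ℝ)+1))) := by
        refine mul_le_mul_of_nonneg_left ?_ (by positivity)
        rw [hw]
        exact poly_bound (a:ℝ) (b:ℝ) (Nat.cast_nonneg a) (Nat.cast_nonneg b)
    _ = 81 * (P^2 * (((a:ℝ)+1)^2 * ((b:ℝ)+1))) := by rw [hP]; ring

/-- There is `c > 0` such that `|C(l,l₁,l)| ≤ c (l₁+1)^{-1/4}` for all `l` and
all even `l₁ ≤ 2l`. -/
theorem cg_decay_bound :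
    ∃ c : ℝ, 0 < c ∧ ∀ l l₁ : ℕ, Even l₁ → l₁ ≤ 2 * l →
      |CG0 l l₁ l| ≤ c * ((l₁ : ℝ) + 1) ^ (-(1 / 4 : ℝ)) := by
  refine ⟨3, by norm_num, ?_⟩
  intro l l₁ hev hle
  obtain ⟨a, rfl⟩ := hev
  obtain ⟨b, rfl⟩ : ∃ b, l = a + b := ⟨l - a, by omega⟩
  have hcond : Even ((a+b) + (a+a) + (a+b)) ∧ (a+b) ≤ (a+b) + (a+a) ∧
      (a+b) ≤ (a+a) + (a+b) ∧ (a+a) ≤ (a+b) + (a+b) :=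
    ⟨Nat.even_iff.mpr (by omega), by omega, by omega, by omega⟩
  rw [CG0, if_pos hcond]
  rw [show ((a+b) + (a+a) + (a+b))/2 = 2*a+b from by omega,
      show 2*a+b - (a+b) = a from by omega,
      show 2*a+b - (a+a) = b from by omega,
      show (a+b) + (a+a) - (a+b) = 2*a from by omega,
      show (a+b) + (a+b) - (a+a) = 2*b from by omega,
      show (a+a) + (a+b) - (a+b) = 2*a from by omega,
      show (a+b) + (a+a) + (a+b) + 1 = 2*(2*a+b)+1 from by omega]
  have h1 : |(-1:ℝ)^a| = 1 := by rw [abs_pow, abs_neg, abs_one, one_pow]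
  rw [abs_mul, abs_div, abs_mul, abs_mul, h1, one_mul,
      abs_of_nonneg (Real.sqrt_nonneg _), abs_of_nonneg (Real.sqrt_nonneg _),
      abs_of_nonneg (show (0:ℝ) ≤ (((2*a+b).factorial:ℝ)) by positivity),
      abs_of_nonneg (show (0:ℝ) ≤ (a.factorial:ℝ) * (b.factorial:ℝ) * (a.factorial:ℝ) by positivity)]
  have := key a b
  push_cast
  push_cast at this
  convert this using 3 <;> push_cast <;> ring

end
end

section
/- There exist constants c₁, c₂ > 0 such that for every integer l ≥ 3 and every integer l₁ with l/3 ≤ l₁ ≤ 2l/3, one has c₁ · l^{1/2} / ( l₁^{1/2} (l − l₁)^{1/2} ) ≤ C(l₁, l − l₁, l)² ≤ c₂ · l^{1/2} / ( l₁^{1/2} (l − l₁)^{1/2} ). (Here C(l₁, l−l₁, l)² equals the explicit quantity (2l+1) ( l! / ( l₁! (l−l₁)! ) )² · (2l₁)! (2l−2l₁)! / (2l+1)!, up to direct evaluation of the defining formula.) -/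
open scoped BigOperators

noncomputable section

private lemma cb_rec (n : ℕ) :
    ((n : ℝ) + 1) * ((n+1).centralBinom : ℝ) = 2 * (2*(n:ℝ) + 1) * (n.centralBinom : ℝ) := by
  exact_mod_cast congrArg (Nat.cast : ℕ → ℝ) (Nat.succ_mul_centralBinom_succ n)

private lemma cb_sq_upper (n : ℕ) :
    ((n.centralBinom : ℝ))^2 * (3*(n:ℝ)+1) ≤ 16^n := by
  induction n with
  | zero => simp [Nat.centralBinom]
  | succ n ih =>
    have hrec := cb_rec n
    have hX : (0:ℝ) ≤ (n.centralBinom : ℝ) := by positivity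
    have hn : (0:ℝ) ≤ (n:ℝ) := Nat.cast_nonneg n
    have hpos : (0:ℝ) < ((n:ℝ)+1)^2 := by positivity
    have h2 : (((n:ℝ)+1) * ((n+1).centralBinom : ℝ))^2
        = (2 * (2*(n:ℝ) + 1) * (n.centralBinom : ℝ))^2 := by rw [hrec]
    have key : (((n+1).centralBinom : ℝ))^2 * (3*((n:ℝ)+1)+1) * ((n:ℝ)+1)^2
        ≤ 16^(n+1) * ((n:ℝ)+1)^2 := by
      calc (((n+1).centralBinom : ℝ))^2 * (3*((n:ℝ)+1)+1) * ((n:ℝ)+1)^2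
          = 4*(2*(n:ℝ)+1)^2 * ((n.centralBinom : ℝ))^2 * (3*(n:ℝ)+4) := by
            linear_combination (3*(n:ℝ)+4) * h2
        _ ≤ 16*((n:ℝ)+1)^2 * (((n.centralBinom : ℝ))^2 * (3*(n:ℝ)+1)) := by
            nlinarith [mul_nonneg (mul_nonneg hX hX) hn]
        _ ≤ 16*((n:ℝ)+1)^2 * 16^n := by
            apply mul_le_mul_of_nonneg_left ih (by positivity)
        _ = 16^(n+1) * ((n:ℝ)+1)^2 := by ring
    have final := le_of_mul_le_mul_right key hpos
    push_cast
    convert final using 2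

private lemma cb_sq_lower (n : ℕ) (hn : 1 ≤ n) :
    (16:ℝ)^n ≤ 4*(n:ℝ) * ((n.centralBinom : ℝ))^2 := by
  induction n with
  | zero => omega
  | succ n ih =>
    rcases Nat.eq_or_lt_of_le hn with h | h
    · have h0 : n = 0 := by omega
      subst h0
      norm_num [Nat.centralBinom]
    · have hn1 : 1 ≤ n := by omega
      have ih := ih hn1
      have hrec := cb_rec n
      have hX : (0:ℝ) ≤ (n.centralBinom : ℝ) := by positivity
      have hnn : (0:ℝ) ≤ (n:ℝ) := Nat.cast_nonneg n
      have hpos : (0:ℝ) < ((n:ℝ)+1)^2 := by positivity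
      have h2 : (((n:ℝ)+1) * ((n+1).centralBinom : ℝ))^2
          = (2 * (2*(n:ℝ) + 1) * (n.centralBinom : ℝ))^2 := by rw [hrec]
      have key : (16:ℝ)^(n+1) * ((n:ℝ)+1)^2
          ≤ 4*((n:ℝ)+1) * (((n+1).centralBinom : ℝ))^2 * ((n:ℝ)+1)^2 := by
        have step1 : 4*((n:ℝ)+1) * (((n+1).centralBinom : ℝ))^2 * ((n:ℝ)+1)^2
            = 16*((n:ℝ)+1)*((2*(n:ℝ)+1)^2 * ((n.centralBinom : ℝ))^2) := by
          linear_combination (4*((n:ℝ)+1)) * h2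
        have step2 : 16*((n:ℝ)+1)^2 * ((16:ℝ)^n)
            ≤ 16*((n:ℝ)+1)*((2*(n:ℝ)+1)^2 * ((n.centralBinom : ℝ))^2) := by
          have hh : 16*((n:ℝ)+1)^2 * ((16:ℝ)^n) ≤ 16*((n:ℝ)+1)^2 * (4*(n:ℝ) * ((n.centralBinom : ℝ))^2) :=
            mul_le_mul_of_nonneg_left ih (by positivity)
          nlinarith [mul_nonneg (mul_nonneg hX hX) hnn, mul_nonneg (mul_nonneg (mul_nonneg hX hX) hnn) hnn]
        calc (16:ℝ)^(n+1) * ((n:ℝ)+1)^2 = 16*((n:ℝ)+1)^2 * ((16:ℝ)^n) := by ring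
          _ ≤ 16*((n:ℝ)+1)*((2*(n:ℝ)+1)^2 * ((n.centralBinom : ℝ))^2) := step2
          _ = 4*((n:ℝ)+1) * (((n+1).centralBinom : ℝ))^2 * ((n:ℝ)+1)^2 := step1.symm
      have final := le_of_mul_le_mul_right key hpos
      push_cast
      convert final using 2

private lemma cg0_val (a b : ℕ) :
    CG0 a b (a+b) ^ 2
      = (a.centralBinom : ℝ) * (b.centralBinom : ℝ) / ((a+b).centralBinom : ℝ) := by
  have hcond : Even (a + b + (a+b)) ∧ (a+b) ≤ a + b ∧ a ≤ b + (a+b) ∧ b ≤ a + (a+b) :=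
    ⟨⟨a+b, by ring⟩, le_refl _, by omega, by omega⟩
  rw [CG0, if_pos hcond]
  have h1 : (a + b + (a + b)) / 2 = a + b := by omega
  have h2 : a + b - (a + b) = 0 := by omega
  have h3 : a + b - b = a := by omega
  have h4 : a + b - a = b := by omega
  have h6 : a + (a + b) - b = 2*a := by omega
  have h7 : b + (a + b) - a = 2*b := by omega
  have h8 : a + b + (a + b) + 1 = 2*(a+b)+1 := by omega
  rw [h1, h2, h3, h4, h6, h7, h8]
  have hA : ((2*a).factorial : ℝ) = (a.centralBinom : ℝ) * a.factorial * a.factorial := by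
    have hc := Nat.choose_mul_factorial_mul_factorial (by omega : a ≤ 2*a)
    have hd : 2*a - a = a := by omega
    rw [hd] at hc
    rw [Nat.centralBinom, ← hc]
    push_cast
    ring
  have hB : ((2*b).factorial : ℝ) = (b.centralBinom : ℝ) * b.factorial * b.factorial := by
    have hc := Nat.choose_mul_factorial_mul_factorial (by omega : b ≤ 2*b)
    have hd : 2*b - b = b := by omega
    rw [hd] at hc
    rw [Nat.centralBinom, ← hc]
    push_cast
    ring
  have hL : ((2*(a+b)).factorial : ℝ)
      = ((a+b).centralBinom : ℝ) * (a+b).factorial * (a+b).factorial := by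
    have hc := Nat.choose_mul_factorial_mul_factorial (by omega : a+b ≤ 2*(a+b))
    have hd : 2*(a+b) - (a+b) = a+b := by omega
    rw [hd] at hc
    rw [Nat.centralBinom, ← hc]
    push_cast
    ring
  have hL1 : ((2*(a+b)+1).factorial : ℝ) = (2*((a:ℝ)+b)+1) * ((2*(a+b)).factorial : ℝ) := by
    rw [Nat.factorial_succ]
    push_cast
    ring
  have hs1 : Real.sqrt (2 * ((a+b : ℕ) : ℝ) + 1) ^ 2 = 2 * ((a:ℝ)+(b:ℝ)) + 1 := by
    rw [Real.sq_sqrt (by positivity)]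
    push_cast
    ring
  have hs2 : Real.sqrt ((((Nat.factorial 0 : ℕ) : ℝ) * ((2*a).factorial : ℝ) * ((2*b).factorial : ℝ))
      / ((2*(a+b)+1).factorial : ℝ)) ^ 2
      = (((Nat.factorial 0 : ℕ) : ℝ) * ((2*a).factorial : ℝ) * ((2*b).factorial : ℝ))
      / ((2*(a+b)+1).factorial : ℝ) := Real.sq_sqrt (by positivity)
  have hfa : (0:ℝ) < (a.factorial : ℝ) := by exact_mod_cast a.factorial_pos
  have hfb : (0:ℝ) < (b.factorial : ℝ) := by exact_mod_cast b.factorial_pos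
  have hcb : (0:ℝ) < ((a+b).centralBinom : ℝ) := by exact_mod_cast (a+b).centralBinom_pos
  have h2ab : (0:ℝ) < 2*((a:ℝ)+(b:ℝ))+1 := by positivity
  rw [pow_zero, mul_pow, div_pow, mul_pow, mul_pow, one_pow, hs1, hs2, hL1, hA, hB, hL,
    Nat.factorial_zero]
  push_cast
  field_simp

private lemma ratio_bounds (a b : ℕ) (ha : 1 ≤ a) (hb : 1 ≤ b) :
    (1/4 : ℝ) * Real.sqrt ((a:ℝ)+b) / (Real.sqrt a * Real.sqrt b)
      ≤ (a.centralBinom : ℝ) * (b.centralBinom : ℝ) / ((a+b).centralBinom : ℝ) ∧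
    (a.centralBinom : ℝ) * (b.centralBinom : ℝ) / ((a+b).centralBinom : ℝ)
      ≤ 2 * Real.sqrt ((a:ℝ)+b) / (Real.sqrt a * Real.sqrt b) := by
  have hxpos : (0:ℝ) < (a.centralBinom : ℝ) := by exact_mod_cast a.centralBinom_pos
  have hypos : (0:ℝ) < (b.centralBinom : ℝ) := by exact_mod_cast b.centralBinom_pos
  have hzpos : (0:ℝ) < ((a+b).centralBinom : ℝ) := by exact_mod_cast (a+b).centralBinom_pos
  have hapos : (0:ℝ) < (a:ℝ) := by exact_mod_cast ha
  have hbpos : (0:ℝ) < (b:ℝ) := by exact_mod_cast hb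
  have hxu := cb_sq_upper a
  have hyu := cb_sq_upper b
  have hzu := cb_sq_upper (a+b)
  have hxl := cb_sq_lower a ha
  have hyl := cb_sq_lower b hb
  have hzl := cb_sq_lower (a+b) (by omega)
  push_cast at hzu hzl
  set x := (a.centralBinom : ℝ)
  set y := (b.centralBinom : ℝ)
  set z := ((a+b).centralBinom : ℝ)
  have h16 : (16:ℝ)^(a+b) = 16^a * 16^b := pow_add 16 a b
  have hsa := Real.sqrt_pos.mpr hapos
  have hsb := Real.sqrt_pos.mpr hbpos
  have hsl := Real.sqrt_pos.mpr (by positivity : (0:ℝ) < (a:ℝ)+b)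
  have hP : (0:ℝ) < x * y / z := by positivity
  have hQsq : (Real.sqrt ((a:ℝ)+b) / (Real.sqrt a * Real.sqrt b))^2
      = ((a:ℝ)+b) / ((a:ℝ)*(b:ℝ)) := by
    rw [div_pow, mul_pow, Real.sq_sqrt (by positivity : (0:ℝ) ≤ (a:ℝ)+b),
      Real.sq_sqrt hapos.le, Real.sq_sqrt hbpos.le]
  have hPsq : (x * y / z)^2 = x^2 * y^2 / z^2 := by rw [div_pow, mul_pow]
  have c2 : (16:ℝ)^(a+b) ≤ 16*(a:ℝ)*(b:ℝ) * (x^2 * y^2) := by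
    rw [h16]
    calc (16:ℝ)^a * 16^b ≤ (4*(a:ℝ)*x^2) * (4*(b:ℝ)*y^2) :=
          mul_le_mul hxl hyl (by positivity) (by positivity)
      _ = 16*(a:ℝ)*(b:ℝ) * (x^2 * y^2) := by ring
  have c1 : ((a:ℝ)+b) * z^2 ≤ 16^(a+b) := by nlinarith [sq_nonneg z]
  have c3 : (a:ℝ)*(b:ℝ) * (x^2 * y^2) ≤ 16^(a+b) := by
    rw [h16]
    calc (a:ℝ)*(b:ℝ) * (x^2 * y^2) = ((a:ℝ)*x^2) * ((b:ℝ)*y^2) := by ring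
      _ ≤ 16^a * 16^b := by
          apply mul_le_mul _ _ (by positivity) (by positivity)
          · nlinarith [sq_nonneg x]
          · nlinarith [sq_nonneg y]
  have c4 : (16:ℝ)^(a+b) ≤ 4*((a:ℝ)+b) * z^2 := hzl
  constructor
  · rw [← pow_le_pow_iff_left₀ (by positivity) hP.le (by norm_num : (2:ℕ) ≠ 0),
      hPsq, div_pow, mul_pow, mul_pow,
      Real.sq_sqrt (le_of_lt (by positivity : (0:ℝ) < (a:ℝ)+b)),
      Real.sq_sqrt hapos.le, Real.sq_sqrt hbpos.le,
      div_le_div_iff₀ (by positivity) (by positivity)]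
    calc ((1:ℝ)/4)^2 * ((a:ℝ)+(b:ℝ)) * z^2 = (1/16)*(((a:ℝ)+(b:ℝ))*z^2) := by ring
      _ ≤ (1/16)*((16:ℝ)^(a+b)) := mul_le_mul_of_nonneg_left c1 (by norm_num)
      _ ≤ (1/16)*(16*(a:ℝ)*(b:ℝ)*(x^2*y^2)) := mul_le_mul_of_nonneg_left c2 (by norm_num)
      _ = x^2*y^2*((a:ℝ)*(b:ℝ)) := by ring
  · rw [← pow_le_pow_iff_left₀ hP.le (by positivity) (by norm_num : (2:ℕ) ≠ 0),
      hPsq, div_pow, mul_pow, mul_pow,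
      Real.sq_sqrt (le_of_lt (by positivity : (0:ℝ) < (a:ℝ)+b)),
      Real.sq_sqrt hapos.le, Real.sq_sqrt hbpos.le,
      div_le_div_iff₀ (by positivity) (by positivity)]
    calc x^2*y^2*((a:ℝ)*(b:ℝ)) = (a:ℝ)*(b:ℝ)*(x^2*y^2) := by ring
      _ ≤ (16:ℝ)^(a+b) := c3
      _ ≤ 4*((a:ℝ)+(b:ℝ))*z^2 := c4
      _ = (2:ℝ)^2*((a:ℝ)+(b:ℝ))*z^2 := by ring

/-- There are `c₁, c₂ > 0` such that for every `l ≥ 3` and every `l₁` with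
`l/3 ≤ l₁ ≤ 2l/3`,
`c₁ l^{1/2}/(l₁^{1/2}(l−l₁)^{1/2}) ≤ C(l₁, l−l₁, l)² ≤ c₂ l^{1/2}/(l₁^{1/2}(l−l₁)^{1/2})`. -/
theorem cg_central_square_asymptotics :
    ∃ c₁ c₂ : ℝ, 0 < c₁ ∧ 0 < c₂ ∧
      ∀ l l₁ : ℕ, 3 ≤ l → l ≤ 3 * l₁ → 3 * l₁ ≤ 2 * l →
        c₁ * (l : ℝ) ^ ((1 : ℝ) / 2) /
            ((l₁ : ℝ) ^ ((1 : ℝ) / 2) * ((l : ℝ) - (l₁ : ℝ)) ^ ((1 : ℝ) / 2)) ≤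
          CG0 l₁ (l - l₁) l ^ 2 ∧
        CG0 l₁ (l - l₁) l ^ 2 ≤
          c₂ * (l : ℝ) ^ ((1 : ℝ) / 2) /
            ((l₁ : ℝ) ^ ((1 : ℝ) / 2) * ((l : ℝ) - (l₁ : ℝ)) ^ ((1 : ℝ) / 2)) := by
  refine ⟨1/4, 2, by norm_num, by norm_num, ?_⟩
  intro l l₁ h3 hlo hhi
  obtain ⟨b, rfl⟩ : ∃ b, l = l₁ + b := ⟨l - l₁, by omega⟩
  have hsub : l₁ + b - l₁ = b := by omega
  rw [hsub]
  have ha : 1 ≤ l₁ := by omega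
  have hb : 1 ≤ b := by omega
  have hcast : ((l₁ + b : ℕ) : ℝ) - (l₁ : ℝ) = (b : ℝ) := by push_cast; ring
  rw [hcast, ← Real.sqrt_eq_rpow, ← Real.sqrt_eq_rpow, ← Real.sqrt_eq_rpow]
  rw [cg0_val l₁ b]
  have h := ratio_bounds l₁ b ha hb
  push_cast at h ⊢
  exact h

end
end

section
/- There exist constants c₁, c₂ > 0 such that for every integer l ≥ 3, c₁ · l^{1/2} ≤ Σ_{l₁ = ⌈l/3⌉}^{⌊2l/3⌋} C(l₁, l − l₁, l)² ≤ c₂ · l^{1/2}. -/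
/-!
For `l₁ + l₂ = l` the coefficient collapses to
`C(l₁, l₂, l)² = binom(2l₁, l₁) · binom(2l₂, l₂) / binom(2l, l)`.
The elementary bounds `4ⁿ / √(4n) ≤ binom(2n, n) ≤ 4ⁿ / √(3n + 1)`, obtained by induction from
`(n + 1) · binom(2n + 2, n + 1) = 2 (2n + 1) · binom(2n, n)`, then put every term with
`l/3 ≤ l₁ ≤ 2l/3` between `1 / (2√l)` and `2 / √l`, and there are between `2l/9` and `l` such terms.
-/

open scoped BigOperators

noncomputable section

namespace Nat

theorem sixteen_pow_le_four_mul_mul_centralBinom_sq {n : ℕ} (hn : 0 < n) :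
    16 ^ n ≤ 4 * n * centralBinom n ^ 2 := by
  induction n, hn using Nat.le_induction with
  | base => decide
  | succ n hn ih =>
    have hrec := succ_mul_centralBinom_succ n
    refine Nat.le_of_mul_le_mul_left ?_ n.succ_pos
    calc (n + 1) * 16 ^ (n + 1) = 16 * (n + 1) * 16 ^ n := by ring
      _ ≤ 16 * (n + 1) * (4 * n * centralBinom n ^ 2) := Nat.mul_le_mul_left _ ih
      _ = 16 * (4 * n * (n + 1)) * centralBinom n ^ 2 := by ring
      _ ≤ 16 * (2 * n + 1) ^ 2 * centralBinom n ^ 2 := by gcongr; nlinarith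
      _ = 4 * ((n + 1) * centralBinom (n + 1)) ^ 2 := by rw [hrec]; ring
      _ = (n + 1) * (4 * (n + 1) * centralBinom (n + 1) ^ 2) := by ring

theorem three_mul_add_one_mul_centralBinom_sq_le (n : ℕ) :
    (3 * n + 1) * centralBinom n ^ 2 ≤ 16 ^ n := by
  induction n with
  | zero => simp
  | succ n ih =>
    have hrec := succ_mul_centralBinom_succ n
    refine Nat.le_of_mul_le_mul_left ?_ (pow_pos n.succ_pos 2)
    calc (n + 1) ^ 2 * ((3 * (n + 1) + 1) * centralBinom (n + 1) ^ 2)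
        = (3 * n + 4) * ((n + 1) * centralBinom (n + 1)) ^ 2 := by ring
      _ = 4 * (3 * n + 4) * (2 * n + 1) ^ 2 * centralBinom n ^ 2 := by rw [hrec]; ring
      _ ≤ 16 * (n + 1) ^ 2 * (3 * n + 1) * centralBinom n ^ 2 :=
          Nat.mul_le_mul_right _ (by nlinarith)
      _ = 16 * (n + 1) ^ 2 * ((3 * n + 1) * centralBinom n ^ 2) := by ring
      _ ≤ 16 * (n + 1) ^ 2 * 16 ^ n := Nat.mul_le_mul_left _ ih
      _ = (n + 1) ^ 2 * 16 ^ (n + 1) := by ring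

theorem centralBinom_add_sq_le {k m : ℕ} (hk : 0 < k) (hm : 0 < m) :
    centralBinom (k + m) ^ 2 ≤ 4 * (k + m) * (centralBinom k * centralBinom m) ^ 2 := by
  have hkm : 4 * k * m ≤ (k + m) ^ 2 := by nlinarith [sq_nonneg ((k : ℤ) - m)]
  refine Nat.le_of_mul_le_mul_left ?_ (by omega : 0 < k + m)
  calc (k + m) * centralBinom (k + m) ^ 2
      ≤ (3 * (k + m) + 1) * centralBinom (k + m) ^ 2 := Nat.mul_le_mul_right _ (by omega)
    _ ≤ 16 ^ k * 16 ^ m := by rw [← pow_add]; exact three_mul_add_one_mul_centralBinom_sq_le _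
    _ ≤ (4 * k * centralBinom k ^ 2) * (4 * m * centralBinom m ^ 2) :=
        Nat.mul_le_mul (sixteen_pow_le_four_mul_mul_centralBinom_sq hk)
          (sixteen_pow_le_four_mul_mul_centralBinom_sq hm)
    _ = 4 * (4 * k * m) * (centralBinom k * centralBinom m) ^ 2 := by ring
    _ ≤ 4 * (k + m) ^ 2 * (centralBinom k * centralBinom m) ^ 2 := by gcongr
    _ = (k + m) * (4 * (k + m) * (centralBinom k * centralBinom m) ^ 2) := by ring

theorem mul_centralBinom_mul_sq_le {k m : ℕ} (hk : k + m ≤ 3 * k) (hm : k + m ≤ 3 * m) :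
    (k + m) * (centralBinom k * centralBinom m) ^ 2 ≤ 4 * centralBinom (k + m) ^ 2 := by
  rcases Nat.eq_zero_or_pos (k + m) with h0 | hpos
  · simp [h0]
  have hkm : (k + m) ^ 2 ≤ (3 * k + 1) * (3 * m + 1) := by nlinarith
  refine Nat.le_of_mul_le_mul_left ?_ hpos
  calc (k + m) * ((k + m) * (centralBinom k * centralBinom m) ^ 2)
      = (k + m) ^ 2 * (centralBinom k * centralBinom m) ^ 2 := by ring
    _ ≤ (3 * k + 1) * (3 * m + 1) * (centralBinom k * centralBinom m) ^ 2 := by gcongr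
    _ = ((3 * k + 1) * centralBinom k ^ 2) * ((3 * m + 1) * centralBinom m ^ 2) := by ring
    _ ≤ 16 ^ k * 16 ^ m :=
        Nat.mul_le_mul (three_mul_add_one_mul_centralBinom_sq_le k)
          (three_mul_add_one_mul_centralBinom_sq_le m)
    _ = 16 ^ (k + m) := (pow_add _ _ _).symm
    _ ≤ 4 * (k + m) * centralBinom (k + m) ^ 2 := sixteen_pow_le_four_mul_mul_centralBinom_sq hpos
    _ = (k + m) * (4 * centralBinom (k + m) ^ 2) := by ring

theorem cast_centralBinom_eq_factorial_div {K : Type*} [DivisionSemiring K] [CharZero K]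
    (n : ℕ) : (centralBinom n : K) = (2 * n)! / (n ! * n !) := by
  rw [centralBinom_eq_two_mul_choose, cast_choose K (by omega : n ≤ 2 * n),
    show 2 * n - n = n by omega]

end Nat

open Nat in
theorem CG0_sq_eq_centralBinom_div (k m : ℕ) :
    CG0 k m (k + m) ^ 2 = centralBinom k * centralBinom m / centralBinom (k + m) := by
  have hcond : Even (k + m + (k + m)) ∧ k + m ≤ k + m ∧ k ≤ m + (k + m) ∧ m ≤ k + (k + m) :=
    ⟨⟨k + m, rfl⟩, le_rfl, by omega, by omega⟩
  rw [CG0, if_pos hcond, show (k + m + (k + m)) / 2 = k + m by omega, Nat.sub_self,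
    show k + m - m = k by omega, show k + m - k = m by omega,
    show k + (k + m) - m = 2 * k by omega, show m + (k + m) - k = 2 * m by omega,
    show k + m + (k + m) + 1 = 2 * (k + m) + 1 by omega, factorial_succ,
    cast_centralBinom_eq_factorial_div, cast_centralBinom_eq_factorial_div,
    cast_centralBinom_eq_factorial_div]
  simp only [pow_zero, factorial_zero, cast_one, one_mul, mul_pow, div_pow]
  rw [Real.sq_sqrt (by positivity), Real.sq_sqrt (by positivity)]
  push_cast
  field_simp

theorem sqrt_mul_CG0_sq_bounds {k m : ℕ} (hk : k + m ≤ 3 * k) (hm : k + m ≤ 3 * m)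
    (hpos : 0 < k + m) :
    1 / 2 ≤ √((k + m : ℕ) : ℝ) * CG0 k m (k + m) ^ 2 ∧
      √((k + m : ℕ) : ℝ) * CG0 k m (k + m) ^ 2 ≤ 2 := by
  have hB : (0 : ℝ) < Nat.centralBinom (k + m) := by exact_mod_cast Nat.centralBinom_pos _
  have hsq : ((k + m : ℕ) : ℝ) * (CG0 k m (k + m) ^ 2) ^ 2 =
      (k + m) * (Nat.centralBinom k * Nat.centralBinom m : ℝ) ^ 2 /
        (Nat.centralBinom (k + m) : ℝ) ^ 2 := by
    rw [CG0_sq_eq_centralBinom_div]; push_cast; ring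
  rw [← Real.sqrt_sq (sq_nonneg (CG0 k m (k + m))), ← Real.sqrt_mul (by positivity), hsq]
  constructor
  · rw [Real.le_sqrt (by norm_num) (by positivity), le_div_iff₀ (pow_pos hB 2)]
    have h := Nat.cast_le (α := ℝ) |>.mpr
      (Nat.centralBinom_add_sq_le (k := k) (m := m) (by omega) (by omega))
    push_cast at h ⊢
    linarith
  · rw [Real.sqrt_le_left (by norm_num), div_le_iff₀ (pow_pos hB 2)]
    have h := Nat.cast_le (α := ℝ) |>.mpr (Nat.mul_centralBinom_mul_sq_le hk hm)
    push_cast at h ⊢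
    linarith

/-- There are `c₁, c₂ > 0` such that for every `l ≥ 3`,
`c₁ l^{1/2} ≤ Σ_{l₁=⌈l/3⌉}^{⌊2l/3⌋} C(l₁, l−l₁, l)² ≤ c₂ l^{1/2}`. -/
theorem cg_central_sum_asymptotics :
    ∃ c₁ c₂ : ℝ, 0 < c₁ ∧ 0 < c₂ ∧
      ∀ l : ℕ, 3 ≤ l →
        c₁ * (l : ℝ) ^ ((1 : ℝ) / 2) ≤
            ∑ l₁ ∈ Finset.Icc ((l + 2) / 3) (2 * l / 3), CG0 l₁ (l - l₁) l ^ 2 ∧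
          ∑ l₁ ∈ Finset.Icc ((l + 2) / 3) (2 * l / 3), CG0 l₁ (l - l₁) l ^ 2 ≤
            c₂ * (l : ℝ) ^ ((1 : ℝ) / 2) := by
  refine ⟨1 / 9, 2, by norm_num, by norm_num, fun l hl => ?_⟩
  rw [← Real.sqrt_eq_rpow]
  set s := Finset.Icc ((l + 2) / 3) (2 * l / 3)
  have hterm (k) (hk : k ∈ s) :
      1 / 2 ≤ √(l : ℝ) * CG0 k (l - k) l ^ 2 ∧ √(l : ℝ) * CG0 k (l - k) l ^ 2 ≤ 2 := by
    rw [Finset.mem_Icc] at hk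
    have h := sqrt_mul_CG0_sq_bounds (k := k) (m := l - k) (by omega) (by omega) (by omega)
    rwa [Nat.add_sub_cancel' (by omega)] at h
  have hcard : (2 * l : ℝ) ≤ 9 * s.card ∧ (s.card : ℝ) ≤ l := by
    norm_cast; simp only [s, Nat.card_Icc]; omega
  have hlow := Finset.card_nsmul_le_sum s _ _ fun k hk => (hterm k hk).1
  have hup := Finset.sum_le_card_nsmul s _ _ fun k hk => (hterm k hk).2
  rw [← Finset.mul_sum, nsmul_eq_mul] at hlow hup
  have hsqrt : √(l : ℝ) * √(l : ℝ) = l := Real.mul_self_sqrt (Nat.cast_nonneg l)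
  have hpos : 0 < √(l : ℝ) := Real.sqrt_pos.mpr (by positivity)
  constructor
  · refine le_of_mul_le_mul_left ?_ hpos
    linarith
  · refine le_of_mul_le_mul_left ?_ hpos
    linarith

end
end

section
/- Let α ≥ 0 and let {C_l : l ∈ ℕ} be positive reals for which there are constants a, b > 0 with a (l+1)^α e^{−l} ≤ C_l ≤ b (l+1)^α e^{−l} for all l, and set Γ_l = (2l+1) C_l. Then lim_{l→∞} sup_{l₁ ≥ 0} [ Σ_{l₂ ≥ 0} Γ_{l₁} Γ_{l₂} C(l₁, l₂, l)² ] / [ Σ_{l₁, l₂ ≥ 0} Γ_{l₁} Γ_{l₂} C(l₁, l₂, l)² ] = 0 (i.e., the sufficient condition for the high-frequency central limit theorem in the quadratic case q = 2 holds for exponentially decaying angular power spectra). -/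
open scoped BigOperators

noncomputable section

/-!
Write `l₁ = y + z`, `l₂ = x + z`, `l = x + y` and `J = x + y + z`. Then `C(l₁,l₂,l)²` is
`(2l+1)/(2J+1)` times `c_x c_y c_z / c_J`, where `c_n` is the central binomial coefficient, and the
Wallis-type bounds `(2n+1) c_n² ≤ 16ⁿ ≤ (4n+1) c_n²` give `C(l₁,l₂,l)⁴ ≍ (l+1)/((x+1)(y+1)(z+1))`.
With `Γ_n ≍ (n+1)^β e^{-n}`, `β = α + 1`, the product `Γ_{l₁} Γ_{l₂}` carries the factor
`e^{-l} e^{-2z}`, so every row `Σ_{l₂}` is `O((l+1)^{2β-1/2} e^{-l})` uniformly in `l₁`, while the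
`≍ l` terms with `z = 0` and `l₁ ∈ [l/4, l/2]` already make the double sum
`≳ (l+1)^{2β+1/2} e^{-l}`. The ratio is therefore `O(1/(l+1))`.
-/

open Nat Real Filter Topology

namespace Nat

theorem two_mul_add_one_mul_centralBinom_sq_le (n : ℕ) :
    (2 * n + 1) * centralBinom n ^ 2 ≤ 16 ^ n := by
  induction n with
  | zero => simp
  | succ n ih =>
    have hrec := succ_mul_centralBinom_succ n
    have key : (n + 1) ^ 2 * ((2 * (n + 1) + 1) * centralBinom (n + 1) ^ 2) ≤
        (n + 1) ^ 2 * 16 ^ (n + 1) := by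
      calc (n + 1) ^ 2 * ((2 * (n + 1) + 1) * centralBinom (n + 1) ^ 2)
          = 4 * ((2 * n + 3) * (2 * n + 1)) * ((2 * n + 1) * centralBinom n ^ 2) := by
            rw [show (n + 1) ^ 2 * ((2 * (n + 1) + 1) * centralBinom (n + 1) ^ 2) =
              (2 * n + 3) * ((n + 1) * centralBinom (n + 1)) ^ 2 by ring, hrec]
            ring
        _ ≤ 4 * (4 * (n + 1) ^ 2) * 16 ^ n :=
            Nat.mul_le_mul (Nat.mul_le_mul_left 4 (by nlinarith)) ih
        _ = (n + 1) ^ 2 * 16 ^ (n + 1) := by ring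
    exact Nat.le_of_mul_le_mul_left key (by positivity)

theorem sixteen_pow_le_four_mul_add_one_mul_centralBinom_sq (n : ℕ) :
    16 ^ n ≤ (4 * n + 1) * centralBinom n ^ 2 := by
  induction n with
  | zero => simp
  | succ n ih =>
    have hrec := succ_mul_centralBinom_succ n
    have key : (n + 1) ^ 2 * 16 ^ (n + 1) ≤
        (n + 1) ^ 2 * ((4 * (n + 1) + 1) * centralBinom (n + 1) ^ 2) := by
      calc (n + 1) ^ 2 * 16 ^ (n + 1) = 16 * (n + 1) ^ 2 * 16 ^ n := by ring
        _ ≤ 16 * (n + 1) ^ 2 * ((4 * n + 1) * centralBinom n ^ 2) :=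
            Nat.mul_le_mul_left _ ih
        _ = 4 * (4 * (n + 1) ^ 2 * (4 * n + 1)) * centralBinom n ^ 2 := by ring
        _ ≤ 4 * ((4 * n + 5) * (2 * n + 1) ^ 2) * centralBinom n ^ 2 :=
            Nat.mul_le_mul_right _ (Nat.mul_le_mul_left 4 (by nlinarith))
        _ = (n + 1) ^ 2 * ((4 * (n + 1) + 1) * centralBinom (n + 1) ^ 2) := by
            rw [show (n + 1) ^ 2 * ((4 * (n + 1) + 1) * centralBinom (n + 1) ^ 2) =
              (4 * n + 5) * ((n + 1) * centralBinom (n + 1)) ^ 2 by ring, hrec]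
            ring
    exact Nat.le_of_mul_le_mul_left key (by positivity)

theorem cast_centralBinom (n : ℕ) :
    (centralBinom n : ℝ) = (2 * n)! / (n ! : ℝ) ^ 2 := by
  rw [centralBinom_eq_two_mul_choose, cast_choose ℝ (by omega), show 2 * n - n = n by omega, sq]

end Nat

theorem CG0_sq_eq (x y z : ℕ) :
    CG0 (y + z) (x + z) (x + y) ^ 2 =
      (2 * ((x : ℝ) + y) + 1) / (2 * ((x : ℝ) + y + z) + 1) *
        (centralBinom x * centralBinom y * centralBinom z / centralBinom (x + y + z)) := by
  have hcond : Even (y + z + (x + z) + (x + y)) ∧ x + y ≤ y + z + (x + z) ∧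
      y + z ≤ x + z + (x + y) ∧ x + z ≤ y + z + (x + y) :=
    ⟨⟨x + y + z, by omega⟩, by omega, by omega, by omega⟩
  have hJ : (y + z + (x + z) + (x + y)) / 2 = x + y + z := by omega
  rw [CG0, if_pos hcond, hJ, show x + y + z - (x + y) = z by omega,
    show x + y + z - (x + z) = y by omega, show x + y + z - (y + z) = x by omega,
    show y + z + (x + z) - (x + y) = 2 * z by omega,
    show y + z + (x + y) - (x + z) = 2 * y by omega,
    show x + z + (x + y) - (y + z) = 2 * x by omega,
    show y + z + (x + z) + (x + y) + 1 = 2 * (x + y + z) + 1 by omega, factorial_succ]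
  have hsign : ((-1 : ℝ) ^ z) ^ 2 = 1 := by
    rw [← pow_mul, mul_comm, pow_mul, neg_one_sq, one_pow]
  simp only [cast_centralBinom, mul_pow, div_pow, hsign]
  rw [Real.sq_sqrt (by positivity), Real.sq_sqrt (by positivity)]
  have := (x + y + z).factorial_pos
  push_cast
  field_simp

theorem centralBinom_ratio_sq_le (x y z : ℕ) :
    ((centralBinom x * centralBinom y * centralBinom z / centralBinom (x + y + z) : ℝ)) ^ 2 ≤
      (4 * ((x : ℝ) + y + z) + 1) / ((2 * (x : ℝ) + 1) * (2 * y + 1) * (2 * z + 1)) := by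
  have h (n : ℕ) : (2 * (n : ℝ) + 1) * centralBinom n ^ 2 ≤ 16 ^ n := by
    exact_mod_cast two_mul_add_one_mul_centralBinom_sq_le n
  have hJ :
      (16 : ℝ) ^ (x + y + z) ≤ (4 * ((x : ℝ) + y + z) + 1) * centralBinom (x + y + z) ^ 2 := by
    exact_mod_cast sixteen_pow_le_four_mul_add_one_mul_centralBinom_sq (x + y + z)
  have := centralBinom_pos (x + y + z)
  rw [div_pow, div_le_div_iff₀ (by positivity) (by positivity)]
  calc ((centralBinom x : ℝ) * centralBinom y * centralBinom z) ^ 2 *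
        ((2 * (x : ℝ) + 1) * (2 * y + 1) * (2 * z + 1))
      = ((2 * (x : ℝ) + 1) * centralBinom x ^ 2) * ((2 * (y : ℝ) + 1) * centralBinom y ^ 2) *
          ((2 * (z : ℝ) + 1) * centralBinom z ^ 2) := by ring
    _ ≤ 16 ^ x * 16 ^ y * 16 ^ z := by gcongr <;> apply h
    _ = 16 ^ (x + y + z) := by rw [pow_add, pow_add]
    _ ≤ _ := hJ

theorem le_centralBinom_ratio_sq (x y z : ℕ) :
    (2 * ((x : ℝ) + y + z) + 1) / ((4 * (x : ℝ) + 1) * (4 * y + 1) * (4 * z + 1)) ≤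
      ((centralBinom x * centralBinom y * centralBinom z / centralBinom (x + y + z) : ℝ)) ^ 2 := by
  have h (n : ℕ) : (16 : ℝ) ^ n ≤ (4 * (n : ℝ) + 1) * centralBinom n ^ 2 := by
    exact_mod_cast sixteen_pow_le_four_mul_add_one_mul_centralBinom_sq n
  have hJ : (2 * ((x : ℝ) + y + z) + 1) * centralBinom (x + y + z) ^ 2 ≤ 16 ^ (x + y + z) := by
    exact_mod_cast two_mul_add_one_mul_centralBinom_sq_le (x + y + z)
  have := centralBinom_pos (x + y + z)
  rw [div_pow, div_le_div_iff₀ (by positivity) (by positivity)]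
  calc (2 * ((x : ℝ) + y + z) + 1) * centralBinom (x + y + z) ^ 2
      ≤ 16 ^ (x + y + z) := hJ
    _ = 16 ^ x * 16 ^ y * 16 ^ z := by rw [pow_add, pow_add]
    _ ≤ ((4 * (x : ℝ) + 1) * centralBinom x ^ 2) * ((4 * (y : ℝ) + 1) * centralBinom y ^ 2) *
          ((4 * (z : ℝ) + 1) * centralBinom z ^ 2) := by gcongr <;> apply h
    _ = _ := by ring

theorem CG0_pow_four_le (x y z : ℕ) :
    CG0 (y + z) (x + z) (x + y) ^ 4 ≤
      4 * ((x : ℝ) + y + 1) / (((x : ℝ) + 1) * (y + 1) * (z + 1)) := by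
  set r : ℝ := (2 * ((x : ℝ) + y) + 1) / (2 * ((x : ℝ) + y + z) + 1)
  set R : ℝ := centralBinom x * centralBinom y * centralBinom z / centralBinom (x + y + z)
  have hr : r ≤ 1 :=
    div_le_one_of_le₀ (by linarith [z.cast_nonneg (α := ℝ)]) (by positivity)
  have hr0 : 0 ≤ r := by positivity
  calc CG0 (y + z) (x + z) (x + y) ^ 4 = r ^ 2 * R ^ 2 := by
        rw [show 4 = 2 * 2 by rfl, pow_mul, CG0_sq_eq]; ring
    _ ≤ r * ((4 * ((x : ℝ) + y + z) + 1) /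
          ((2 * (x : ℝ) + 1) * (2 * y + 1) * (2 * z + 1))) := by
        gcongr
        · nlinarith
        · exact centralBinom_ratio_sq_le x y z
    _ ≤ 4 * ((x : ℝ) + y + 1) / (((x : ℝ) + 1) * (y + 1) * (z + 1)) := by
        have hJ : r * (4 * ((x : ℝ) + y + z) + 1) ≤ 4 * ((x : ℝ) + y + 1) := by
          rw [div_mul_eq_mul_div, div_le_iff₀ (by positivity)]
          nlinarith [x.cast_nonneg (α := ℝ), y.cast_nonneg (α := ℝ),
            z.cast_nonneg (α := ℝ)]
        have hD : ((x : ℝ) + 1) * (y + 1) * (z + 1) ≤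
            (2 * (x : ℝ) + 1) * (2 * y + 1) * (2 * z + 1) := by
          gcongr <;> linarith [x.cast_nonneg (α := ℝ), y.cast_nonneg (α := ℝ),
            z.cast_nonneg (α := ℝ)]
        rw [mul_div_assoc', div_le_div_iff₀ (by positivity) (by positivity)]
        exact mul_le_mul hJ hD (by positivity) (by positivity)

theorem CG0_pow_four_ge (x y : ℕ) : 1 / (16 * ((x : ℝ) + y + 1)) ≤ CG0 y x (x + y) ^ 4 := by
  have h := le_centralBinom_ratio_sq x y 0
  have hsq := CG0_sq_eq x y 0
  simp only [add_zero, Nat.cast_zero, mul_zero, zero_add, centralBinom_zero, Nat.cast_one,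
    mul_one] at h hsq
  rw [show 4 = 2 * 2 by rfl, pow_mul, hsq, div_self (by positivity), one_mul]
  refine le_trans ?_ h
  rw [div_le_div_iff₀ (by positivity) (by positivity)]
  nlinarith [x.cast_nonneg (α := ℝ), y.cast_nonneg (α := ℝ)]

theorem exists_eq_add_of_CG0_ne_zero {l₁ l₂ l₃ : ℕ} (h : CG0 l₁ l₂ l₃ ≠ 0) :
    ∃ x y z, l₁ = y + z ∧ l₂ = x + z ∧ l₃ = x + y := by
  unfold CG0 at h
  split_ifs at h with hc
  · obtain ⟨⟨k, hk⟩, h₁, h₂, h₃⟩ := hc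
    exact ⟨k - l₁, k - l₂, k - l₃, by omega, by omega, by omega⟩
  · exact absurd rfl h

theorem CG0_sq_le (x y z : ℕ) :
    CG0 (y + z) (x + z) (x + y) ^ 2 ≤
      2 * √(((x : ℝ) + y + 1) / (((x : ℝ) + 1) * (y + 1) * (z + 1))) := by
  have h := Real.sqrt_le_sqrt (CG0_pow_four_le x y z)
  rwa [show 4 = 2 * 2 by rfl, pow_mul, Real.sqrt_sq (sq_nonneg _), mul_div_assoc,
    Real.sqrt_mul (by norm_num), show (4 : ℝ) = 2 ^ 2 by norm_num, Real.sqrt_sq (by norm_num)] at h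

theorem CG0_sq_le_two_mul_sqrt (l₁ l₂ l₃ : ℕ) : CG0 l₁ l₂ l₃ ^ 2 ≤ 2 * √((l₃ : ℝ) + 1) := by
  by_cases h : CG0 l₁ l₂ l₃ = 0
  · rw [h, zero_pow two_ne_zero]; positivity
  obtain ⟨x, y, z, rfl, rfl, rfl⟩ := exists_eq_add_of_CG0_ne_zero h
  refine (CG0_sq_le x y z).trans ?_
  push_cast
  gcongr
  have hle (n : ℕ) : (1 : ℝ) ≤ n + 1 := le_add_of_nonneg_left n.cast_nonneg
  exact div_le_self (by positivity)
    (one_le_mul_of_one_le_of_one_le (one_le_mul_of_one_le_of_one_le (hle x) (hle y)) (hle z))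

theorem inv_four_mul_sqrt_le_CG0_sq (x y : ℕ) :
    1 / (4 * √((x : ℝ) + y + 1)) ≤ CG0 y x (x + y) ^ 2 := by
  have h := Real.sqrt_le_sqrt (CG0_pow_four_ge x y)
  rwa [show 4 = 2 * 2 by rfl, pow_mul, Real.sqrt_sq (sq_nonneg _), one_div, Real.sqrt_inv,
    Real.sqrt_mul (by norm_num), show (16 : ℝ) = 4 ^ 2 by norm_num, Real.sqrt_sq (by norm_num),
    ← one_div] at h

theorem CG0_eq_zero_of_lt_or_lt {l₁ l₂ l₃ : ℕ} (h : l₂ < l₁.dist l₃ ∨ l₁ + l₃ < l₂) :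
    CG0 l₁ l₂ l₃ = 0 := by
  by_contra hne
  obtain ⟨x, y, z, rfl, rfl, rfl⟩ := exists_eq_add_of_CG0_ne_zero hne
  unfold Nat.dist at h
  omega

theorem summable_CG0_row (Γ : ℕ → ℝ) (l₁ l : ℕ) :
    Summable fun l₂ => Γ l₁ * Γ l₂ * CG0 l₁ l₂ l ^ 2 := by
  refine summable_of_ne_finset_zero (s := Finset.range (l₁ + l + 1)) fun l₂ hl₂ => ?_
  rw [CG0_eq_zero_of_lt_or_lt (Or.inr (by simp at hl₂; omega)), zero_pow two_ne_zero, mul_zero]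

theorem summable_rpow_mul_exp_neg (γ : ℝ) :
    Summable fun n : ℕ => ((n : ℝ) + 1) ^ γ * exp (-n) := by
  have hk :
      Summable fun n : ℕ => exp 1 * (((n + 1 : ℕ) : ℝ) ^ ⌈γ⌉₊ * exp (-1 * (n + 1 : ℕ))) :=
    ((summable_nat_add_iff 1).mpr (summable_pow_mul_exp_neg_nat_mul ⌈γ⌉₊ one_pos)).mul_left _
  refine hk.of_nonneg_of_le (fun n => by positivity) fun n => ?_
  calc ((n : ℝ) + 1) ^ γ * exp (-n) ≤ ((n : ℝ) + 1) ^ (⌈γ⌉₊ : ℝ) * exp (-n) := by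
        gcongr
        exacts [le_add_of_nonneg_left n.cast_nonneg, Nat.le_ceil γ]
    _ = _ := by
        rw [Real.rpow_natCast, mul_left_comm, ← Real.exp_add]
        push_cast
        ring_nf

theorem rpow_mul_rpow_mul_sqrt_div_le {X Y Z L β : ℝ} (hX : 0 < X) (hY : 0 < Y) (hZ : 0 < Z)
    (hXL : X ≤ L) (hYL : Y ≤ L) (hβ : 1 / 2 ≤ β) :
    (Y * Z) ^ β * (X * Z) ^ β * √(L / (X * Y * Z)) ≤
      L ^ (2 * β - 1 / 2) * Z ^ (2 * β - 1 / 2) := by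
  have hL : 0 < L := hX.trans_le hXL
  have hsplit (W : ℝ) (hW : 0 < W) : W ^ (2 * β - 1 / 2) = W ^ (β - 1 / 2) * W ^ β := by
    rw [← Real.rpow_add hW]; ring_nf
  calc (Y * Z) ^ β * (X * Z) ^ β * √(L / (X * Y * Z))
      = X ^ (β - 1 / 2) * Y ^ (β - 1 / 2) * (Z ^ (2 * β - 1 / 2) * L ^ (1 / 2 : ℝ)) := by
        rw [hsplit Z hZ, Real.sqrt_eq_rpow, Real.div_rpow hL.le (by positivity),
          Real.mul_rpow (mul_pos hX hY).le hZ.le, Real.mul_rpow hX.le hY.le,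
          Real.mul_rpow hY.le hZ.le, Real.mul_rpow hX.le hZ.le,
          Real.rpow_sub hX, Real.rpow_sub hY, Real.rpow_sub hZ]
        field_simp
    _ ≤ L ^ (β - 1 / 2) * L ^ (β - 1 / 2) * (Z ^ (2 * β - 1 / 2) * L ^ (1 / 2 : ℝ)) := by
        gcongr
    _ = L ^ (2 * β - 1 / 2) * Z ^ (2 * β - 1 / 2) := by
        rw [← Real.rpow_add hL, mul_comm, mul_assoc, ← Real.rpow_add hL]; ring_nf

section Asymptotics

variable {Γ : ℕ → ℝ} {β B a : ℝ}

theorem mul_mul_CG0_sq_le (hβ : 1 / 2 ≤ β) (hΓ0 : ∀ n, 0 ≤ Γ n)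
    (hΓ : ∀ n : ℕ, Γ n ≤ B * ((n : ℝ) + 1) ^ β * exp (-n)) (x y z : ℕ) :
    Γ (y + z) * Γ (x + z) * CG0 (y + z) (x + z) (x + y) ^ 2 ≤
      2 * B ^ 2 * ((((x + y : ℕ) : ℝ) + 1) ^ (2 * β - 1 / 2) * exp (-(x + y : ℕ))) *
        (((z : ℝ) + 1) ^ (2 * β - 1 / 2) * exp (-(2 * z))) := by
  have hB : 0 ≤ B := by simpa using (hΓ0 0).trans (hΓ 0)
  have hΓ' (u v : ℕ) : Γ (u + v) ≤ B * (((u : ℝ) + 1) * (v + 1)) ^ β * exp (-(u + v)) := by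
    refine (hΓ _).trans ?_
    push_cast
    gcongr
    nlinarith [u.cast_nonneg (α := ℝ), v.cast_nonneg (α := ℝ)]
  have hexp :
      exp (-((y : ℝ) + z)) * exp (-((x : ℝ) + z)) = exp (-((x : ℝ) + y)) * exp (-(2 * z)) := by
    rw [← Real.exp_add, ← Real.exp_add]; ring_nf
  calc Γ (y + z) * Γ (x + z) * CG0 (y + z) (x + z) (x + y) ^ 2
      ≤ (B * (((y : ℝ) + 1) * (z + 1)) ^ β * exp (-((y : ℝ) + z))) *
          (B * (((x : ℝ) + 1) * (z + 1)) ^ β * exp (-((x : ℝ) + z))) *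
          (2 * √(((x : ℝ) + y + 1) / (((x : ℝ) + 1) * (y + 1) * (z + 1)))) :=
        mul_le_mul (mul_le_mul (hΓ' y z) (hΓ' x z) (hΓ0 _) (by positivity)) (CG0_sq_le x y z)
          (sq_nonneg _) (by positivity)
    _ = 2 * B ^ 2 * ((((y : ℝ) + 1) * (z + 1)) ^ β * (((x : ℝ) + 1) * (z + 1)) ^ β *
          √(((x : ℝ) + y + 1) / (((x : ℝ) + 1) * (y + 1) * (z + 1)))) *
          (exp (-((x : ℝ) + y)) * exp (-(2 * z))) := by rw [← hexp]; ring
    _ ≤ 2 * B ^ 2 * (((x : ℝ) + y + 1) ^ (2 * β - 1 / 2) * ((z : ℝ) + 1) ^ (2 * β - 1 / 2)) *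
          (exp (-((x : ℝ) + y)) * exp (-(2 * z))) := by
        gcongr 2 * B ^ 2 * ?_ * _
        exact rpow_mul_rpow_mul_sqrt_div_le (by positivity) (by positivity) (by positivity)
          (by linarith [y.cast_nonneg (α := ℝ)]) (by linarith [x.cast_nonneg (α := ℝ)]) hβ
    _ = _ := by push_cast; ring

-- `l₁.dist l` is the least `l₂` allowed by the triangle inequality, and for
-- `l₂ = t + l₁.dist l` the gap `l₁ + l₂ - l = 2 z` is at least `t`: the rows decay geometrically.
theorem mul_mul_CG0_sq_add_dist_le (hβ : 1 / 2 ≤ β) (hΓ0 : ∀ n, 0 ≤ Γ n)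
    (hΓ : ∀ n : ℕ, Γ n ≤ B * ((n : ℝ) + 1) ^ β * exp (-n)) (l l₁ t : ℕ) :
    Γ l₁ * Γ (t + l₁.dist l) * CG0 l₁ (t + l₁.dist l) l ^ 2 ≤
      2 * B ^ 2 * (∑' n : ℕ, ((n : ℝ) + 1) ^ (2 * β - 1 / 2) * exp (-n)) *
        (((l : ℝ) + 1) ^ (2 * β - 1 / 2) * exp (-l)) * exp (-(1 / 2)) ^ t := by
  set K := ∑' n : ℕ, ((n : ℝ) + 1) ^ (2 * β - 1 / 2) * exp (-n)
  by_cases h : CG0 l₁ (t + l₁.dist l) l = 0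
  · rw [h, zero_pow two_ne_zero, mul_zero]
    have : 0 ≤ K := tsum_nonneg fun n => by positivity
    positivity
  obtain ⟨x, y, z, rfl, hl₂, rfl⟩ := exists_eq_add_of_CG0_ne_zero h
  have htz : (t : ℝ) ≤ 2 * z := by
    unfold Nat.dist at hl₂
    exact_mod_cast (show t ≤ 2 * z by omega)
  have hz : ((z : ℝ) + 1) ^ (2 * β - 1 / 2) * exp (-(2 * z)) ≤ K * exp (-(1 / 2)) ^ t :=
    calc ((z : ℝ) + 1) ^ (2 * β - 1 / 2) * exp (-(2 * z))
        = (((z : ℝ) + 1) ^ (2 * β - 1 / 2) * exp (-z)) * exp (-z) := by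
          rw [mul_assoc, ← Real.exp_add]; ring_nf
      _ ≤ K * exp (-(1 / 2)) ^ t := by
          rw [← Real.exp_nat_mul]
          gcongr
          · exact (summable_rpow_mul_exp_neg _).le_tsum z fun n _ => by positivity
          · linarith
  rw [hl₂]
  exact (mul_mul_CG0_sq_le hβ hΓ0 hΓ x y z).trans
    ((mul_le_mul_of_nonneg_left hz (by positivity)).trans_eq (by ring))

theorem exists_tsum_CG0_row_le (hβ : 1 / 2 ≤ β) (hΓ0 : ∀ n, 0 ≤ Γ n)
    (hΓ : ∀ n : ℕ, Γ n ≤ B * ((n : ℝ) + 1) ^ β * exp (-n)) :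
    ∃ M, ∀ l l₁ : ℕ, ∑' l₂, Γ l₁ * Γ l₂ * CG0 l₁ l₂ l ^ 2 ≤
      M * (((l : ℝ) + 1) ^ (2 * β - 1 / 2) * exp (-l)) := by
  set K := ∑' n : ℕ, ((n : ℝ) + 1) ^ (2 * β - 1 / 2) * exp (-n)
  set ρ := exp (-(1 / 2))
  have hρ : ρ < 1 := Real.exp_lt_one_iff.mpr (by norm_num)
  refine ⟨2 * B ^ 2 * K / (1 - ρ), fun l l₁ => ?_⟩
  set D := 2 * B ^ 2 * K * (((l : ℝ) + 1) ^ (2 * β - 1 / 2) * exp (-l))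
  have hsum := summable_CG0_row Γ l₁ l
  have hvanish : ∀ l₂ ∈ Finset.range (l₁.dist l), Γ l₁ * Γ l₂ * CG0 l₁ l₂ l ^ 2 = 0 :=
    fun l₂ hl₂ => by
      rw [CG0_eq_zero_of_lt_or_lt (Or.inl (Finset.mem_range.mp hl₂)), zero_pow two_ne_zero,
        mul_zero]
  calc ∑' l₂, Γ l₁ * Γ l₂ * CG0 l₁ l₂ l ^ 2
      = ∑' t, Γ l₁ * Γ (t + l₁.dist l) * CG0 l₁ (t + l₁.dist l) l ^ 2 := by
        rw [← hsum.sum_add_tsum_nat_add (l₁.dist l), Finset.sum_eq_zero hvanish, zero_add]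
    _ ≤ ∑' t : ℕ, D * ρ ^ t :=
        Summable.tsum_le_tsum (mul_mul_CG0_sq_add_dist_le hβ hΓ0 hΓ l l₁)
          ((summable_nat_add_iff (f := fun l₂ => Γ l₁ * Γ l₂ * CG0 l₁ l₂ l ^ 2) _).mpr hsum)
          ((summable_geometric_of_lt_one (by positivity) hρ).mul_left D)
    _ = 2 * B ^ 2 * K / (1 - ρ) * (((l : ℝ) + 1) ^ (2 * β - 1 / 2) * exp (-l)) := by
        rw [tsum_mul_left, tsum_geometric_of_lt_one (by positivity) hρ]
        ring

theorem le_mul_mul_CG0_sq_of_le (hβ : 0 ≤ β) (ha : 0 ≤ a)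
    (hΓ : ∀ n : ℕ, a * ((n : ℝ) + 1) ^ β * exp (-n) ≤ Γ n) {x y : ℕ}
    (hx : x + y + 1 ≤ 2 * (x + 1)) (hy : x + y + 1 ≤ 4 * (y + 1)) :
    a ^ 2 / (4 * 8 ^ β) * ((((x + y : ℕ) : ℝ) + 1) ^ (2 * β - 1 / 2) * exp (-(x + y : ℕ))) ≤
      Γ y * Γ x * CG0 y x (x + y) ^ 2 := by
  have hx' : (x : ℝ) + y + 1 ≤ 2 * ((x : ℝ) + 1) := by exact_mod_cast hx
  have hy' : (x : ℝ) + y + 1 ≤ 4 * ((y : ℝ) + 1) := by exact_mod_cast hy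
  set L : ℝ := (x : ℝ) + y + 1
  have hL : 0 < L := by positivity
  have hLL : L * L / 8 ≤ ((y : ℝ) + 1) * (x + 1) := by nlinarith
  push_cast
  calc a ^ 2 / (4 * 8 ^ β) * (L ^ (2 * β - 1 / 2) * exp (-((x : ℝ) + y)))
      = a ^ 2 * (L * L / 8) ^ β * exp (-((x : ℝ) + y)) * (1 / (4 * √L)) := by
        rw [Real.div_rpow (by positivity) (by norm_num), Real.mul_rpow hL.le hL.le,
          Real.rpow_sub hL, show 2 * β = β + β by ring, Real.rpow_add hL, Real.sqrt_eq_rpow]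
        field_simp
    _ ≤ a ^ 2 * (((y : ℝ) + 1) * (x + 1)) ^ β * exp (-((x : ℝ) + y)) *
          CG0 y x (x + y) ^ 2 := by
        gcongr
        exact inv_four_mul_sqrt_le_CG0_sq x y
    _ = (a * ((y : ℝ) + 1) ^ β * exp (-y)) * (a * ((x : ℝ) + 1) ^ β * exp (-x)) *
          CG0 y x (x + y) ^ 2 := by
        rw [Real.mul_rpow (by positivity) (by positivity), neg_add, Real.exp_add]; ring
    _ ≤ Γ y * Γ x * CG0 y x (x + y) ^ 2 := by
        gcongr
        exacts [(by positivity : (0 : ℝ) ≤ a * ((y : ℝ) + 1) ^ β * exp (-y)).trans (hΓ y),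
          hΓ y, hΓ x]

theorem exists_le_tsum_tsum_CG0 (hβ : 0 ≤ β) (ha : 0 < a)
    (hΓ : ∀ n : ℕ, a * ((n : ℝ) + 1) ^ β * exp (-n) ≤ Γ n)
    (hsum : ∀ l, Summable fun l₁ => ∑' l₂, Γ l₁ * Γ l₂ * CG0 l₁ l₂ l ^ 2) :
    ∃ c > 0, ∀ l : ℕ, c * ((l : ℝ) + 1) * (((l : ℝ) + 1) ^ (2 * β - 1 / 2) * exp (-l)) ≤
      ∑' l₁, ∑' l₂, Γ l₁ * Γ l₂ * CG0 l₁ l₂ l ^ 2 := by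
  have hΓ0 (n : ℕ) : 0 ≤ Γ n :=
    (by positivity : 0 ≤ a * ((n : ℝ) + 1) ^ β * exp (-n)).trans (hΓ n)
  refine ⟨a ^ 2 / (4 * 8 ^ β) / 8, by positivity, fun l => ?_⟩
  set P := ((l : ℝ) + 1) ^ (2 * β - 1 / 2) * exp (-l)
  set W := Finset.Icc (l / 4) (l / 2)
  have hrow :
      ∀ l₁ ∈ W, a ^ 2 / (4 * 8 ^ β) * P ≤ ∑' l₂, Γ l₁ * Γ l₂ * CG0 l₁ l₂ l ^ 2 := by
    intro l₁ hl₁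
    rw [Finset.mem_Icc] at hl₁
    have h :=
      le_mul_mul_CG0_sq_of_le hβ ha.le hΓ (x := l - l₁) (y := l₁) (by omega) (by omega)
    rw [show l - l₁ + l₁ = l by omega] at h
    exact h.trans ((summable_CG0_row Γ l₁ l).le_tsum (l - l₁) fun n _ =>
      mul_nonneg (mul_nonneg (hΓ0 l₁) (hΓ0 n)) (sq_nonneg _))
  have hW : ((l : ℝ) + 1) / 8 ≤ W.card := by
    rw [Nat.card_Icc, div_le_iff₀ (by norm_num)]
    exact_mod_cast (show l + 1 ≤ (l / 2 + 1 - l / 4) * 8 by omega)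
  calc a ^ 2 / (4 * 8 ^ β) / 8 * ((l : ℝ) + 1) * P
      = ((l : ℝ) + 1) / 8 * (a ^ 2 / (4 * 8 ^ β) * P) := by ring
    _ ≤ W.card * (a ^ 2 / (4 * 8 ^ β) * P) := by gcongr
    _ ≤ ∑ l₁ ∈ W, ∑' l₂, Γ l₁ * Γ l₂ * CG0 l₁ l₂ l ^ 2 := by
        rw [← nsmul_eq_mul]; exact Finset.card_nsmul_le_sum W _ _ hrow
    _ ≤ ∑' l₁, ∑' l₂, Γ l₁ * Γ l₂ * CG0 l₁ l₂ l ^ 2 :=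
        (hsum l).sum_le_tsum W fun l₁ _ => tsum_nonneg fun l₂ =>
          mul_nonneg (mul_nonneg (hΓ0 l₁) (hΓ0 l₂)) (sq_nonneg _)

theorem summable_tsum_CG0_row (hΓ0 : ∀ n, 0 ≤ Γ n) (hΓ : Summable Γ) (l : ℕ) :
    Summable fun l₁ => ∑' l₂, Γ l₁ * Γ l₂ * CG0 l₁ l₂ l ^ 2 := by
  refine ((hΓ.mul_right (∑' n, Γ n)).mul_right (2 * √((l : ℝ) + 1))).of_nonneg_of_le
    (fun l₁ => tsum_nonneg fun l₂ => mul_nonneg (mul_nonneg (hΓ0 l₁) (hΓ0 l₂)) (sq_nonneg _))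
    fun l₁ => ?_
  calc ∑' l₂, Γ l₁ * Γ l₂ * CG0 l₁ l₂ l ^ 2
      ≤ ∑' l₂, Γ l₁ * Γ l₂ * (2 * √((l : ℝ) + 1)) :=
        (summable_CG0_row Γ l₁ l).tsum_le_tsum
          (fun l₂ => mul_le_mul_of_nonneg_left (CG0_sq_le_two_mul_sqrt l₁ l₂ l)
            (mul_nonneg (hΓ0 l₁) (hΓ0 l₂)))
          ((hΓ.mul_left (Γ l₁)).mul_right _)
    _ = Γ l₁ * (∑' n, Γ n) * (2 * √((l : ℝ) + 1)) := by rw [tsum_mul_right, tsum_mul_left]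

end Asymptotics

theorem two_mul_add_one_mul_le_of_le {t c b α : ℝ} (ht : 0 ≤ t) (hc : 0 ≤ c)
    (h : c ≤ b * (t + 1) ^ α * exp (-t)) :
    (2 * t + 1) * c ≤ 2 * b * (t + 1) ^ (α + 1) * exp (-t) := by
  rw [Real.rpow_add_one (by positivity)]
  calc (2 * t + 1) * c ≤ (2 * t + 2) * (b * (t + 1) ^ α * exp (-t)) :=
        mul_le_mul (by linarith) h hc (by linarith [hc.trans h])
    _ = _ := by ring

theorem le_two_mul_add_one_mul_of_le {t c a α : ℝ} (ht : 0 ≤ t) (ha : 0 ≤ a)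
    (h : a * (t + 1) ^ α * exp (-t) ≤ c) :
    a * (t + 1) ^ (α + 1) * exp (-t) ≤ (2 * t + 1) * c := by
  rw [Real.rpow_add_one (by positivity)]
  calc a * ((t + 1) ^ α * (t + 1)) * exp (-t) = (t + 1) * (a * (t + 1) ^ α * exp (-t)) := by ring
    _ ≤ (2 * t + 1) * c := mul_le_mul (by linarith) h (by positivity) (by linarith)

theorem tendsto_iSup_div_atTop_of_le {f : ℕ → ℕ → ℝ} {g P : ℕ → ℝ} {M c : ℝ}
    (hf : ∀ l i, 0 ≤ f l i) (hc : 0 < c) (hP : ∀ l, 0 < P l) (hfM : ∀ l i, f l i ≤ M * P l)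
    (hg : ∀ l : ℕ, c * ((l : ℝ) + 1) * P l ≤ g l) :
    Tendsto (fun l => ⨆ i, f l i / g l) atTop (𝓝 0) := by
  have hg0 (l : ℕ) : 0 < g l :=
    (by have := hP l; positivity : 0 < c * ((l : ℝ) + 1) * P l).trans_le (hg l)
  refine squeeze_zero (fun l => Real.iSup_nonneg fun i => div_nonneg (hf l i) (hg0 l).le)
    (fun l => ciSup_le fun i => ?_)
    (by simpa using tendsto_one_div_add_atTop_nhds_zero_nat.const_mul (M / c))
  rw [div_le_iff₀ (hg0 l)]
  calc f l i ≤ M * P l := hfM l i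
    _ = M / c * ((l : ℝ) + 1)⁻¹ * (c * ((l : ℝ) + 1) * P l) := by field_simp
    _ ≤ M / c * ((l : ℝ) + 1)⁻¹ * g l := by
        have hM : 0 ≤ M := nonneg_of_mul_nonneg_left ((hf 0 0).trans (hfM 0 0)) (hP 0)
        gcongr
        exact hg l

open Filter in
theorem exponential_spectrum_clt_condition_general
    (α : ℝ) (hα : 0 ≤ α) (C : ℕ → ℝ)
    (a b : ℝ) (ha : 0 < a)
    (hlow : ∀ l : ℕ, a * ((l : ℝ) + 1) ^ α * Real.exp (-(l : ℝ)) ≤ C l)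
    (hupp : ∀ l : ℕ, C l ≤ b * ((l : ℝ) + 1) ^ α * Real.exp (-(l : ℝ)))
    (Γ : ℕ → ℝ) (hΓ : ∀ l, Γ l = (2 * (l : ℝ) + 1) * C l) :
    Tendsto
      (fun l : ℕ => ⨆ l₁ : ℕ,
        (∑' l₂ : ℕ, Γ l₁ * Γ l₂ * CG0 l₁ l₂ l ^ 2) /
          (∑' l₁ : ℕ, ∑' l₂ : ℕ, Γ l₁ * Γ l₂ * CG0 l₁ l₂ l ^ 2))
      atTop (nhds 0) := by
  have hC0 (n : ℕ) : 0 ≤ C n :=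
    (by positivity : 0 ≤ a * ((n : ℝ) + 1) ^ α * exp (-n)).trans (hlow n)
  have hΓ0 (n : ℕ) : 0 ≤ Γ n := by rw [hΓ]; have := hC0 n; positivity
  have hΓ_le (n : ℕ) : Γ n ≤ 2 * b * ((n : ℝ) + 1) ^ (α + 1) * exp (-n) :=
    hΓ n ▸ two_mul_add_one_mul_le_of_le n.cast_nonneg (hC0 n) (hupp n)
  have hΓ_ge (n : ℕ) : a * ((n : ℝ) + 1) ^ (α + 1) * exp (-n) ≤ Γ n :=
    hΓ n ▸ le_two_mul_add_one_mul_of_le n.cast_nonneg ha.le (hlow n)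
  have hΓ_sum : Summable Γ :=
    ((summable_rpow_mul_exp_neg (α + 1)).mul_left (2 * b)).of_nonneg_of_le hΓ0
      fun n => (hΓ_le n).trans_eq (by ring)
  obtain ⟨M, hM⟩ := exists_tsum_CG0_row_le (by linarith : 1 / 2 ≤ α + 1) hΓ0 hΓ_le
  obtain ⟨c, hc, hc'⟩ := exists_le_tsum_tsum_CG0 (by linarith : 0 ≤ α + 1) ha hΓ_ge
    (summable_tsum_CG0_row hΓ0 hΓ_sum)
  exact tendsto_iSup_div_atTop_of_le
    (fun l l₁ => tsum_nonneg fun l₂ => mul_nonneg (mul_nonneg (hΓ0 l₁) (hΓ0 l₂)) (sq_nonneg _))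
    hc (fun l => by positivity) hM hc'

open Filter in
/-- For exponentially decaying angular power spectra `C_l ≍ (l+1)^α e^{−l}`,
the sufficient condition for the high-frequency CLT in the quadratic case holds:
`sup_{l₁} (Σ_{l₂} Γ_{l₁}Γ_{l₂}C(l₁,l₂,l)²)/(Σ_{l₁,l₂} Γ_{l₁}Γ_{l₂}C(l₁,l₂,l)²) → 0`. -/
theorem exponential_spectrum_clt_condition
    (α : ℝ) (hα : 0 ≤ α) (C : ℕ → ℝ) (hCpos : ∀ l, 0 < C l)
    (a b : ℝ) (ha : 0 < a) (hb : 0 < b)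
    (hlow : ∀ l : ℕ, a * ((l : ℝ) + 1) ^ α * Real.exp (-(l : ℝ)) ≤ C l)
    (hupp : ∀ l : ℕ, C l ≤ b * ((l : ℝ) + 1) ^ α * Real.exp (-(l : ℝ)))
    (Γ : ℕ → ℝ) (hΓ : ∀ l, Γ l = (2 * (l : ℝ) + 1) * C l) :
    Tendsto
      (fun l : ℕ => ⨆ l₁ : ℕ,
        (∑' l₂ : ℕ, Γ l₁ * Γ l₂ * CG0 l₁ l₂ l ^ 2) /
          (∑' l₁ : ℕ, ∑' l₂ : ℕ, Γ l₁ * Γ l₂ * CG0 l₁ l₂ l ^ 2))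
      atTop (nhds 0) :=
  exponential_spectrum_clt_condition_general α hα C a b ha hlow hupp Γ hΓ

end
end
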